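/- Let (M_p)_p and (N_p)_p be sequences of positive reals with M_0 = N_0 = 1, with associated functions M and N. Define Q_p = min_{0 ≤ q ≤ p} M_q N_{p−q}. Then the associated function Q of (Q_p)_p satisfies Q(t) = M(t) + N(t) for all t > 0. -/

import Mathlib

/-! Since `x ↦ log (t ^ p / x)` is antitone, the term `log (t ^ p / Q_p)` is the largest of the
sums `log (t ^ q / M_q) + log (t ^ (p - q) / N_(p - q))`, `q ≤ p`. Taking the supremum over `p`
therefore ranges over all pairs `(q, r)`, and a supremum over pairs of sums is the sum of the
suprema. -/

noncomputable def assocFn (L : ℕ → ℝ) (t : ℝ) : EReal :=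
  ⨆ p : ℕ, ((Real.log (t ^ p / L p) : ℝ) : EReal)

theorem EReal.iSup_add_iSup_le {ι κ : Sort*} {f : ι → EReal} {g : κ → EReal} {c : EReal}
    (h : ∀ i j, f i + g j ≤ c) : iSup f + iSup g ≤ c :=
  EReal.add_le_of_forall_lt fun _ ha _ hb => by
    obtain ⟨i, hi⟩ := lt_iSup_iff.mp ha
    obtain ⟨j, hj⟩ := lt_iSup_iff.mp hb
    exact (add_le_add hi.le hj.le).trans (h i j)

theorem Real.log_pow_add_div_mul {t a b : ℝ} (ht : t ≠ 0) (ha : a ≠ 0) (hb : b ≠ 0)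
    (q r : ℕ) :
    Real.log (t ^ (q + r) / (a * b)) = Real.log (t ^ q / a) + Real.log (t ^ r / b) := by
  rw [pow_add, mul_div_mul_comm,
    Real.log_mul (div_ne_zero (pow_ne_zero q ht) ha) (div_ne_zero (pow_ne_zero r ht) hb)]

theorem Real.log_pow_div_le_log_pow_div {t x y : ℝ} (ht : 0 < t) (hy : 0 < y) (hyx : y ≤ x)
    (p : ℕ) : Real.log (t ^ p / x) ≤ Real.log (t ^ p / y) :=
  Real.log_le_log (div_pos (pow_pos ht p) (hy.trans_le hyx))
    (div_le_div_of_nonneg_left (pow_pos ht p).le hy hyx)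

theorem log_le_assocFn (L : ℕ → ℝ) (t : ℝ) (p : ℕ) :
    ((Real.log (t ^ p / L p) : ℝ) : EReal) ≤ assocFn L t :=
  le_iSup (fun p => ((Real.log (t ^ p / L p) : ℝ) : EReal)) p

def minConv {α : Type*} [InfSet α] [Mul α] (M N : ℕ → α) (p : ℕ) : α :=
  ⨅ q : Fin (p + 1), M q * N (p - q)

section minConv

variable {α : Type*} [ConditionallyCompleteLinearOrder α] [Mul α] (M N : ℕ → α)

theorem minConv_le (q r : ℕ) : minConv M N (q + r) ≤ M q * N r := by
  simpa [minConv] using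
    ciInf_le (Finite.bddBelow_range fun k : Fin (q + r + 1) => M k * N (q + r - k))
      ⟨q, by omega⟩

theorem exists_minConv_eq (p : ℕ) : ∃ q ≤ p, minConv M N p = M q * N (p - q) := by
  obtain ⟨q, hq⟩ := exists_eq_ciInf_of_finite (f := fun q : Fin (p + 1) => M q * N (p - q))
  exact ⟨q, Nat.lt_succ_iff.mp q.isLt, hq.symm⟩

end minConv

theorem minConv_pos {M N : ℕ → ℝ} (hM : ∀ p, 0 < M p) (hN : ∀ p, 0 < N p) (p : ℕ) :
    0 < minConv M N p := by
  obtain ⟨q, -, hq⟩ := exists_minConv_eq M N p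
  exact hq ▸ mul_pos (hM q) (hN _)

theorem assocFn_min_conv_general (M N : ℕ → ℝ)
    (hMpos : ∀ p, 0 < M p) (hNpos : ∀ p, 0 < N p) :
    ∀ t : ℝ, 0 < t →
      assocFn (fun p => ⨅ q : Fin (p + 1), M q * N (p - q)) t
        = assocFn M t + assocFn N t := by
  intro t ht
  change assocFn (minConv M N) t = _
  have log_split (q r : ℕ) := Real.log_pow_add_div_mul ht.ne' (hMpos q).ne' (hNpos r).ne' q r
  apply le_antisymm
  · refine iSup_le fun p => ?_
    obtain ⟨q, hqp, hq⟩ := exists_minConv_eq M N p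
    rw [hq, ← Nat.add_sub_cancel' hqp, Nat.add_sub_cancel_left, log_split, EReal.coe_add]
    exact add_le_add (log_le_assocFn M t q) (log_le_assocFn N t (p - q))
  · refine EReal.iSup_add_iSup_le fun q r => ?_
    calc ((Real.log (t ^ q / M q) : ℝ) : EReal) + (Real.log (t ^ r / N r) : ℝ)
        = (Real.log (t ^ (q + r) / (M q * N r)) : ℝ) := by rw [log_split, EReal.coe_add]
      _ ≤ (Real.log (t ^ (q + r) / minConv M N (q + r)) : ℝ) :=
        EReal.coe_le_coe_iff.mpr <|
          Real.log_pow_div_le_log_pow_div ht (minConv_pos hMpos hNpos _) (minConv_le M N q r) _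
      _ ≤ assocFn (minConv M N) t := log_le_assocFn _ t (q + r)

/-- For `Q_p = min_{0 ≤ q ≤ p} M_q N_{p−q}`, the associated function of `(Q_p)`
is `Q(t) = M(t) + N(t)` for all `t > 0`. -/
theorem assocFn_min_conv (M N : ℕ → ℝ)
    (hMpos : ∀ p, 0 < M p) (hNpos : ∀ p, 0 < N p)
    (hM0 : M 0 = 1) (hN0 : N 0 = 1) :
    ∀ t : ℝ, 0 < t →
      assocFn (fun p => ⨅ q : Fin (p + 1), M q * N (p - q)) t
        = assocFn M t + assocFn N t :=
  assocFn_min_conv_general M N hMpos hNpos
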